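/- In any algebra (S,*,') satisfying the three axioms, the identity (x' * x) * x''' = x''' holds for all x in S. -/

import Mathlib

/-!
Write `x ∗ y` for `m x y` and `x′` for `i x`. By E1 and E3, `((a ∗ y′′) ∗ y′) ∗ y = a ∗ y′′`:
right multiplication by `y′` and then by `y` fixes every product ending in `y′′`. Consequently
`y′′ ∗ y′ ∗ y = y′′`, and on products ending in `y′′′` right multiplication by `y` agrees with
right multiplication by `y′′`. Since `x′ ∗ x = x′ ∗ x′′ =: e`, the goal is `e ∗ x′′′ = x′′′`; writing
`e ∗ x′′′ = e ∗ x′′′ ∗ x ∗ x′ = e ∗ (x′′′ ∗ x′′) ∗ x′`, E2 moves `e` to the right, and the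
resulting `x′′′ ∗ x′′ ∗ x′ ∗ x ∗ x′` collapses to `x′′′` by the facts above.
-/

namespace TypeTwoOneAlgebra

variable {S : Type*} {m : S → S → S} {i : S → S}

local infixl:70 " ∗ " => m
local postfix:max "′" => i

theorem mul_inv_inv_mul_inv_mul (E1 : ∀ x, x ∗ x′ ∗ x = x)
    (E3 : ∀ x y z, x ∗ y ∗ z = x ∗ (y ∗ z′′)) (a y : S) :
    a ∗ y′′ ∗ y′ ∗ y = a ∗ y′′ := by
  calc a ∗ y′′ ∗ y′ ∗ y = a ∗ (y′′ ∗ y′′′ ∗ y′′) := by rw [E3 a, E3 a]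
    _ = a ∗ y′′ := by rw [E1]

theorem inv_inv_mul_inv_mul (E1 : ∀ x, x ∗ x′ ∗ x = x)
    (E3 : ∀ x y z, x ∗ y ∗ z = x ∗ (y ∗ z′′)) (y : S) :
    y′′ ∗ y′ ∗ y = y′′ := by
  conv_lhs => rw [← E1 y′′]
  rw [mul_inv_inv_mul_inv_mul E1 E3, E1]

theorem mul_inv_inv_inv_mul_inv_inv (E1 : ∀ x, x ∗ x′ ∗ x = x)
    (E3 : ∀ x y z, x ∗ y ∗ z = x ∗ (y ∗ z′′)) (a y : S) :
    a ∗ y′′′ ∗ y′′ = a ∗ y′′′ ∗ y := by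
  rw [← mul_inv_inv_mul_inv_mul E1 E3 (a ∗ y′′′) y, mul_inv_inv_mul_inv_mul E1 E3 a y′]

theorem inv_inv_inv_mul_inv_inv (E1 : ∀ x, x ∗ x′ ∗ x = x)
    (E3 : ∀ x y z, x ∗ y ∗ z = x ∗ (y ∗ z′′)) (y : S) :
    y′′′ ∗ y′′ = y′′′ ∗ y := by
  rw [← E1 y′′′, mul_inv_inv_inv_mul_inv_inv E1 E3]

theorem inv_mul_self_eq_inv_mul_inv_inv (E1 : ∀ x, x ∗ x′ ∗ x = x)
    (E3 : ∀ x y z, x ∗ y ∗ z = x ∗ (y ∗ z′′)) (y : S) :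
    y′ ∗ y = y′ ∗ y′′ := by
  have hy : y′ ∗ (y′′ ∗ y′′′) = y′ := by rw [← E3, E1]
  calc y′ ∗ y = y′ ∗ (y′′ ∗ y′′′) ∗ y := by rw [hy]
    _ = y′ ∗ y′′ := by rw [E3 y′, E1]

end TypeTwoOneAlgebra

open TypeTwoOneAlgebra in
theorem stmt (S : Type*) (m : S → S → S) (i : S → S)
    (E1 : ∀ x, m (m x (i x)) x = x)
    (E2 : ∀ x y, m (m x (i x)) (m (i y) y) = m (m (i y) y) (m x (i x)))
    (E3 : ∀ x y z, m (m x y) z = m x (m y (i (i z)))) :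
    ∀ x, m (m (i x) x) (i (i (i x))) = i (i (i x)) := by
  intro x
  calc m (m (i x) x) (i (i (i x))) = m (m (i x) (i (i x))) (i (i (i x))) := by
        rw [inv_mul_self_eq_inv_mul_inv_inv E1 E3]
    _ = m (m (m (m (i x) (i (i x))) (i (i (i x)))) x) (i x) := by
        rw [← mul_inv_inv_inv_mul_inv_inv E1 E3, mul_inv_inv_mul_inv_mul E1 E3]
    _ = m (m (m (m (i (i (i x))) (i (i x))) (i x)) x) (i x) := by
        rw [E3 _ (i (i (i x))) x, E2, E3 _ (i x) x]
    _ = i (i (i x)) := by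
        rw [inv_inv_mul_inv_mul E1 E3, ← inv_inv_inv_mul_inv_inv E1 E3, inv_inv_mul_inv_mul E1 E3]
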